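/- Let Â_k, T̂_k, α, D be as in the Chebyshev variance bound (E[‖T̂_k‖_F²] ≤ D α^k), let κ > 0, λ' ∈ (−1,1), and let γ_k(λ',κ) denote the von Mises Chebyshev coefficients γ_0 = 1/π, γ_k = (2/π)(I_k(κ)/I_0(κ)) cos(k cos⁻¹ λ') for k ≥ 1, with proposal q_k(λ',κ) ∝ |γ_k| (i.e., q_0 = 1/Z, q_k = (2/Z)(I_k(κ)/I_0(κ))|cos(k cos⁻¹ λ')|). Then E[‖(γ_k/q_k) T̂_k‖_F²] ≤ (D e^κ / (π² I_0(κ))) · (1 + (2e^κ/I_0(κ))(e^{ακ/2} − 1)), where the expectation is over k ~ q and the randomness of T̂_k. -/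

import Mathlib

open Matrix MeasureTheory ProbabilityTheory Real
open scoped Matrix.Norms.L2Operator

noncomputable section

instance {D : ℕ} : MeasurableSpace (Matrix (Fin D) (Fin D) ℝ) :=
  inferInstanceAs (MeasurableSpace (Fin D → Fin D → ℝ))

/-- The randomized Chebyshev recursion. -/
def randChebT {D : ℕ} {Ω : Type*} (Ahat : ℕ → Ω → Matrix (Fin D) (Fin D) ℝ) :
    ℕ → Ω → Matrix (Fin D) (Fin D) ℝ
  | 0 => fun _ => 1
  | 1 => fun ω => Ahat 1 ω
  | (k + 2) => fun ω =>
      (2 : ℝ) • (Ahat (k + 2) ω * randChebT Ahat (k + 1) ω) - randChebT Ahat k ω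

/-- Squared Frobenius norm of a matrix. -/
def frobSq {D : ℕ} (M : Matrix (Fin D) (Fin D) ℝ) : ℝ :=
  ∑ i, ∑ j, (M i j) ^ 2

/-- Entrywise expectation of a random matrix. -/
def matExp {D : ℕ} {Ω : Type*} [MeasurableSpace Ω] (μ : Measure Ω)
    (X : Ω → Matrix (Fin D) (Fin D) ℝ) : Matrix (Fin D) (Fin D) ℝ :=
  Matrix.of fun i j => ∫ ω, X ω i j ∂μ

/-- The modified Bessel function of the first kind of integer order `k`. -/
def besselI (k : ℕ) (κ : ℝ) : ℝ :=
  ∑' m : ℕ, (κ / 2) ^ (2 * m + k) / ((m.factorial : ℝ) * ((m + k).factorial : ℝ))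

/-!
The matrices `T̂_k` obey `‖T̂_{k+2}‖ ≤ 2‖Â_{k+2}‖‖T̂_{k+1}‖ + ‖T̂_k‖` in operator norm, so they are
dominated by a scalar recursion `u_k` in the norms `a_k = ‖Â_k‖`. Squaring it and using
`2xy ≤ x² + y²` gives `u_{k+2}² ≤ (4a² + 2a) u_{k+1}² + (2a + 1) u_k²` with `a = a_{k+2}` independent
of `u_{k+1}, u_k`; taking expectations, `E u_k² ≤ α^k`, hence `E‖T̂_k‖_F² ≤ D α^k`.

Multiplying the series of `e^{κ/2}` by itself and grouping the pairs `(a, b)` by `b - a ∈ ℤ` gives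
`∑_{n ∈ ℤ} I_{|n|}(κ) = e^κ`, so `Z ≤ e^κ / I_0(κ)`; and `m! k! ≤ (m + k)!` gives
`I_k(κ) ≤ (κ/2)^k / k! · I_0(κ)`. As `γ_k² / q_k = (Z / π) |γ_k|`, the weighted sum is bounded by the
exponential series of `ακ/2`.
-/

open scoped Nat

lemma measurable_l2_opNorm {D : ℕ} : Measurable fun M : Matrix (Fin D) (Fin D) ℝ => ‖M‖ :=
  haveI : BorelSpace (Matrix (Fin D) (Fin D) ℝ) :=
    inferInstanceAs (BorelSpace (Fin D → Fin D → ℝ))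
  measurable_norm

lemma l2_opNorm_one_le {n : Type*} [Fintype n] [DecidableEq n] :
    ‖(1 : Matrix n n ℝ)‖ ≤ 1 := by
  rw [← l2_opNorm_toEuclideanCLM, map_one]
  exact ContinuousLinearMap.norm_id_le

lemma frobSq_nonneg {D : ℕ} (M : Matrix (Fin D) (Fin D) ℝ) : 0 ≤ frobSq M := by
  unfold frobSq; positivity

lemma frobSq_le_card_mul_sq_l2_opNorm {D : ℕ} (M : Matrix (Fin D) (Fin D) ℝ) :
    frobSq M ≤ D * ‖M‖ ^ 2 := by
  have hcol (j : Fin D) : ∑ i, M i j ^ 2 ≤ ‖M‖ ^ 2 := by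
    have h := M.l2_opNorm_mulVec (PiLp.single 2 j 1)
    rw [PiLp.norm_single, norm_one, mul_one] at h
    calc ∑ i, M i j ^ 2
        = ‖(EuclideanSpace.equiv (Fin D) ℝ).symm (M *ᵥ PiLp.single 2 j (1 : ℝ))‖ ^ 2 := by
          rw [EuclideanSpace.norm_sq_eq]
          simp [Matrix.mulVec_single]
      _ ≤ ‖M‖ ^ 2 := by gcongr
  unfold frobSq
  rw [Finset.sum_comm]
  simpa using Finset.sum_le_sum fun j (_ : j ∈ Finset.univ) => hcol j

def chebMajorant (r : ℕ → ℝ) : ℕ → ℝ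
  | 0 => 1
  | 1 => r 1
  | k + 2 => 2 * r (k + 2) * chebMajorant r (k + 1) + chebMajorant r k

lemma chebMajorant_sq_le {r : ℕ → ℝ} (hr : ∀ i, 0 ≤ r i) (k : ℕ) :
    chebMajorant r (k + 2) ^ 2 ≤ (4 * r (k + 2) ^ 2 + 2 * r (k + 2)) * chebMajorant r (k + 1) ^ 2
      + (2 * r (k + 2) + 1) * chebMajorant r k ^ 2 := by
  have hamgm := mul_nonneg (hr (k + 2)) (sq_nonneg (chebMajorant r (k + 1) - chebMajorant r k))
  simp only [chebMajorant]
  nlinarith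

lemma norm_randChebT_le_chebMajorant {D : ℕ} {Ω : Type*}
    (Ahat : ℕ → Ω → Matrix (Fin D) (Fin D) ℝ) (ω : Ω) :
    ∀ k, ‖randChebT Ahat k ω‖ ≤ chebMajorant (fun i => ‖Ahat i ω‖) k
  | 0 => l2_opNorm_one_le
  | 1 => le_rfl
  | k + 2 => by
    have h1 := norm_randChebT_le_chebMajorant Ahat ω (k + 1)
    have h0 := norm_randChebT_le_chebMajorant Ahat ω k
    simp only [randChebT, chebMajorant]
    calc ‖(2 : ℝ) • (Ahat (k + 2) ω * randChebT Ahat (k + 1) ω) - randChebT Ahat k ω‖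
        ≤ 2 * (‖Ahat (k + 2) ω‖ * ‖randChebT Ahat (k + 1) ω‖) + ‖randChebT Ahat k ω‖ := by
          refine (norm_sub_le _ _).trans ?_
          rw [norm_smul, Real.norm_two]
          gcongr
          exact norm_mul_le _ _
      _ ≤ _ := by
          rw [← mul_assoc]
          gcongr

section Moments

variable {Ω : Type*} {X : ℕ → Ω → ℝ}

lemma measurable_chebMajorant {m : MeasurableSpace Ω} {n : ℕ} (hX : ∀ i ≤ n, Measurable (X i)) :
    ∀ k ≤ n, Measurable fun ω => chebMajorant (fun i => X i ω) k := by
  intro k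
  induction k using Nat.twoStepInduction with
  | zero => exact fun _ => measurable_const
  | one => exact hX 1
  | more k ih0 ih1 =>
    intro hk
    exact (((hX (k + 2) hk).const_mul 2).mul (ih1 (by omega))).add (ih0 (by omega))

variable [MeasurableSpace Ω] {μ : Measure Ω}

lemma indepFun_comp_chebMajorant_sq (hX : ∀ i, Measurable (X i)) (hind : iIndepFun X μ)
    {g : ℝ → ℝ} (hg : Measurable g) {n j : ℕ} (hj : j ≤ n) :
    IndepFun (fun ω => g (X (n + 1) ω)) (fun ω => chebMajorant (fun i => X i ω) j ^ 2) μ := by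
  let σ (S : Set ℕ) : MeasurableSpace Ω := ⨆ i ∈ S, MeasurableSpace.comap (X i) inferInstance
  have hX_le {S : Set ℕ} {i : ℕ} (hi : i ∈ S) : Measurable[σ S] (X i) :=
    (comap_measurable (X i)).mono
      (le_iSup₂ (f := fun i (_ : i ∈ S) => MeasurableSpace.comap (X i) inferInstance) i hi) le_rfl
  have hindep : Indep (σ {n + 1}) (σ (Set.Iic n)) μ :=
    indep_iSup_of_disjoint (fun i => (hX i).comap_le) ((iIndepFun_iff_iIndep _ X μ).mp hind)
      (by simp)
  rw [IndepFun_iff_Indep]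
  refine indep_of_indep_of_le hindep (Measurable.comap_le ?_) (Measurable.comap_le ?_)
  · exact hg.comp (hX_le rfl)
  · exact (measurable_chebMajorant (fun i hi => hX_le hi) j hj).pow_const 2

variable [IsProbabilityMeasure μ]

lemma integral_chebMajorant_sq_succ_succ_le (hX : ∀ i, Measurable (X i)) (hind : iIndepFun X μ)
    (hL2 : ∀ i, MemLp (X i) 2 μ) (hX0 : ∀ i ω, 0 ≤ X i ω) {k : ℕ}
    (h₀ : Integrable (fun ω => chebMajorant (fun i => X i ω) k ^ 2) μ)
    (h₁ : Integrable (fun ω => chebMajorant (fun i => X i ω) (k + 1) ^ 2) μ) :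
    Integrable (fun ω => chebMajorant (fun i => X i ω) (k + 2) ^ 2) μ ∧
      ∫ ω, chebMajorant (fun i => X i ω) (k + 2) ^ 2 ∂μ ≤
        (4 * ∫ ω, X (k + 2) ω ^ 2 ∂μ + 2 * ∫ ω, X (k + 2) ω ∂μ) *
            ∫ ω, chebMajorant (fun i => X i ω) (k + 1) ^ 2 ∂μ +
          (2 * ∫ ω, X (k + 2) ω ∂μ + 1) * ∫ ω, chebMajorant (fun i => X i ω) k ^ 2 ∂μ := by
  have hY : Integrable (X (k + 2)) μ := (hL2 _).integrable one_le_two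
  have hG : Integrable (fun ω => 4 * X (k + 2) ω ^ 2 + 2 * X (k + 2) ω) μ :=
    ((hL2 _).integrable_sq.const_mul 4).add (hY.const_mul 2)
  have hH : Integrable (fun ω => 2 * X (k + 2) ω + 1) μ := (hY.const_mul 2).add (integrable_const 1)
  have hGV := indepFun_comp_chebMajorant_sq hX hind (g := fun y => 4 * y ^ 2 + 2 * y)
    (by fun_prop) (n := k + 1) le_rfl
  have hHV := indepFun_comp_chebMajorant_sq hX hind (g := fun y => 2 * y + 1)
    (by fun_prop) (n := k + 1) k.le_succ
  have hGV_int : Integrable (fun ω => (4 * X (k + 2) ω ^ 2 + 2 * X (k + 2) ω) *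
      chebMajorant (fun i => X i ω) (k + 1) ^ 2) μ := hGV.integrable_mul hG h₁
  have hHV_int : Integrable (fun ω => (2 * X (k + 2) ω + 1) *
      chebMajorant (fun i => X i ω) k ^ 2) μ := hHV.integrable_mul hH h₀
  have hbound (ω : Ω) := chebMajorant_sq_le (fun i => hX0 i ω) k
  have hmeas := (measurable_chebMajorant (fun i _ => hX i) (k + 2) le_rfl).pow_const 2
  have hint := (hGV_int.add hHV_int).mono' hmeas.aestronglyMeasurable
    (ae_of_all _ fun ω => (Real.norm_of_nonneg (sq_nonneg _)).trans_le (hbound ω))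
  refine ⟨hint, ?_⟩
  calc _ ≤ ∫ ω, ((4 * X (k + 2) ω ^ 2 + 2 * X (k + 2) ω) *
          chebMajorant (fun i => X i ω) (k + 1) ^ 2 +
        (2 * X (k + 2) ω + 1) * chebMajorant (fun i => X i ω) k ^ 2) ∂μ :=
        integral_mono hint (hGV_int.add hHV_int) hbound
    _ = _ := by
        rw [integral_add hGV_int hHV_int, hGV.integral_fun_mul_eq_mul_integral
            hG.aestronglyMeasurable h₁.aestronglyMeasurable,
          hHV.integral_fun_mul_eq_mul_integral hH.aestronglyMeasurable h₀.aestronglyMeasurable,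
          integral_add ((hL2 _).integrable_sq.const_mul 4) (hY.const_mul 2),
          integral_add (hY.const_mul 2) (integrable_const 1)]
        simp [integral_const_mul]

lemma integral_chebMajorant_sq_le (hX : ∀ i, Measurable (X i)) (hind : iIndepFun X μ)
    (hL2 : ∀ i, MemLp (X i) 2 μ) (hX0 : ∀ i ω, 0 ≤ X i ω) {α : ℝ}
    (hα : ∀ i, 4 * (∫ ω, X i ω ^ 2 ∂μ) + 2 * (∫ ω, X i ω ∂μ) + 1 ≤ α) (k : ℕ) :
    Integrable (fun ω => chebMajorant (fun i => X i ω) k ^ 2) μ ∧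
      ∫ ω, chebMajorant (fun i => X i ω) k ^ 2 ∂μ ≤ α ^ k := by
  have hm1 (i : ℕ) : 0 ≤ ∫ ω, X i ω ∂μ := integral_nonneg (hX0 i)
  have hm2 (i : ℕ) : 0 ≤ ∫ ω, X i ω ^ 2 ∂μ := integral_nonneg fun ω => sq_nonneg _
  induction k using Nat.twoStepInduction with
  | zero => simp [chebMajorant]
  | one =>
    refine ⟨(hL2 1).integrable_sq, ?_⟩
    simp only [chebMajorant, pow_one]
    linarith [hα 1, hm1 1, hm2 1]
  | more k ih₀ ih₁ =>
    obtain ⟨hint, hle⟩ := integral_chebMajorant_sq_succ_succ_le hX hind hL2 hX0 ih₀.1 ih₁.1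
    refine ⟨hint, hle.trans ?_⟩
    have hα1 : 1 ≤ α := by linarith [hα 0, hm1 0, hm2 0]
    have hpow : 0 ≤ α ^ k := by positivity
    calc _ ≤ (4 * (∫ ω, X (k + 2) ω ^ 2 ∂μ) + 2 * ∫ ω, X (k + 2) ω ∂μ) * α ^ (k + 1)
          + (2 * (∫ ω, X (k + 2) ω ∂μ) + 1) * α ^ k := by
          gcongr
          · linarith [hm1 (k + 2), hm2 (k + 2)]
          · exact ih₁.2
          · linarith [hm1 (k + 2)]
          · exact ih₀.2
      _ ≤ (α - 1) * α ^ (k + 1) + α * α ^ k := by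
          gcongr <;> linarith [hα (k + 2), hm2 (k + 2)]
      _ = α ^ (k + 2) := by ring

end Moments

theorem integral_frobSq_randChebT_le {D : ℕ} {Ω : Type*} [MeasurableSpace Ω]
    (μ : Measure Ω) [IsProbabilityMeasure μ] (Ahat : ℕ → Ω → Matrix (Fin D) (Fin D) ℝ)
    (hmeas : ∀ k, Measurable (Ahat k)) (hindep : iIndepFun Ahat μ)
    (hL2 : ∀ k, MemLp (fun ω => ‖Ahat k ω‖) 2 μ) {α : ℝ}
    (hα : ∀ k, 4 * (∫ ω, ‖Ahat k ω‖ ^ 2 ∂μ) + 2 * (∫ ω, ‖Ahat k ω‖ ∂μ) + 1 ≤ α) (k : ℕ) :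
    ∫ ω, frobSq (randChebT Ahat k ω) ∂μ ≤ D * α ^ k := by
  obtain ⟨hint, hle⟩ := integral_chebMajorant_sq_le (fun i => measurable_l2_opNorm.comp (hmeas i))
    (hindep.comp _ fun _ => measurable_l2_opNorm) hL2 (fun i ω => norm_nonneg _) hα k
  calc _ ≤ ∫ ω, D * chebMajorant (fun i => ‖Ahat i ω‖) k ^ 2 ∂μ := by
        refine integral_mono_of_nonneg (ae_of_all _ fun ω => frobSq_nonneg _) (hint.const_mul _)
          (ae_of_all _ fun ω => (frobSq_le_card_mul_sq_l2_opNorm _).trans ?_)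
        dsimp only
        gcongr
        exact norm_randChebT_le_chebMajorant Ahat ω k
    _ ≤ D * α ^ k := by
        rw [integral_const_mul]
        exact mul_le_mul_of_nonneg_left hle D.cast_nonneg

def expTerm (x : ℝ) (n : ℕ) : ℝ := x ^ n / n !

lemma hasSum_expTerm (x : ℝ) : HasSum (expTerm x) (exp x) := by
  rw [Real.exp_eq_exp_ℝ]
  exact NormedSpace.expSeries_div_hasSum_exp x

lemma expTerm_nonneg {x : ℝ} (hx : 0 ≤ x) (n : ℕ) : 0 ≤ expTerm x n := by
  unfold expTerm; positivity

lemma expTerm_add_le {x : ℝ} (hx : 0 ≤ x) (m k : ℕ) :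
    expTerm x (m + k) ≤ expTerm x k * expTerm x m := by
  unfold expTerm
  rw [div_mul_div_comm, ← pow_add, add_comm k m]
  gcongr
  exact_mod_cast Nat.le_of_dvd (Nat.factorial_pos _)
    (add_comm m k ▸ Nat.factorial_mul_factorial_dvd_factorial_add k m)

lemma expTerm_mul_pow (x y : ℝ) (n : ℕ) : expTerm x n * y ^ n = expTerm (y * x) n := by
  unfold expTerm; ring

lemma summable_expTerm_mul_expTerm (x : ℝ) :
    Summable fun p : ℕ × ℕ => expTerm x p.1 * expTerm x p.2 :=
  have h := (hasSum_expTerm x).summable.norm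
  summable_mul_of_summable_norm h h

lemma hasSum_besselI (k : ℕ) (κ : ℝ) :
    HasSum (fun m => expTerm (κ / 2) m * expTerm (κ / 2) (m + k)) (besselI k κ) := by
  have hinj : Function.Injective fun m : ℕ => (m, m + k) := fun a b h => (Prod.ext_iff.mp h).1
  refine ((summable_expTerm_mul_expTerm (κ / 2)).comp_injective hinj).hasSum_iff.mpr ?_
  refine tsum_congr fun m => ?_
  simp only [Function.comp_apply, expTerm]
  rw [div_mul_div_comm, ← pow_add]
  ring_nf

def intProdNatEquiv : ℤ × ℕ ≃ ℕ × ℕ where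
  toFun p := (p.2 + (-p.1).toNat, p.2 + p.1.toNat)
  invFun p := ((p.2 : ℤ) - p.1, min p.1 p.2)
  left_inv p := by ext <;> simp; omega
  right_inv p := by ext <;> simp <;> omega

lemma hasSum_besselI_natAbs (κ : ℝ) : HasSum (fun n : ℤ => besselI n.natAbs κ) (exp κ) := by
  have h := (hasSum_expTerm (κ / 2)).mul (hasSum_expTerm (κ / 2)) (summable_expTerm_mul_expTerm _)
  rw [← Real.exp_add, add_halves, ← intProdNatEquiv.hasSum_iff] at h
  refine h.prod_fiberwise fun n => (hasSum_besselI n.natAbs κ).congr_fun fun m => ?_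
  obtain ⟨k, rfl | rfl⟩ := Int.eq_nat_or_neg n
  · simp [intProdNatEquiv]
  · simp [intProdNatEquiv, mul_comm]

lemma hasSum_besselI_succ (κ : ℝ) :
    HasSum (fun k => besselI (k + 1) κ) ((exp κ - besselI 0 κ) / 2) := by
  have h := (hasSum_besselI_natAbs κ).nat_add_neg
  simp only [Int.natAbs_neg, Int.natAbs_natCast, Int.natAbs_zero] at h
  have h2 : HasSum (fun n => besselI n κ) ((exp κ + besselI 0 κ) / 2) := by
    refine (h.div_const 2).congr_fun fun n => ?_
    ring
  have h3 := (hasSum_nat_add_iff' 1).mpr h2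
  rwa [Finset.sum_range_one, show ∀ a b : ℝ, (a + b) / 2 - b = (a - b) / 2 by intros; ring] at h3

lemma besselI_nonneg {κ : ℝ} (hκ : 0 ≤ κ) (k : ℕ) : 0 ≤ besselI k κ :=
  (hasSum_besselI k κ).nonneg fun m => mul_nonneg (expTerm_nonneg (by positivity) _)
    (expTerm_nonneg (by positivity) _)

lemma one_le_besselI_zero {κ : ℝ} (hκ : 0 ≤ κ) : 1 ≤ besselI 0 κ := by
  have h := (hasSum_besselI 0 κ).summable.le_tsum 0 fun m _ =>
    mul_nonneg (expTerm_nonneg (by positivity) m) (expTerm_nonneg (by positivity) _)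
  rwa [(hasSum_besselI 0 κ).tsum_eq, add_zero, expTerm, pow_zero, Nat.factorial_zero,
    Nat.cast_one, div_one, one_mul] at h

lemma besselI_le_expTerm_mul_besselI_zero {κ : ℝ} (hκ : 0 ≤ κ) (k : ℕ) :
    besselI k κ ≤ expTerm (κ / 2) k * besselI 0 κ := by
  refine hasSum_le (fun m => ?_) (hasSum_besselI k κ) ((hasSum_besselI 0 κ).mul_left _)
  have hx : 0 ≤ κ / 2 := by positivity
  calc _ ≤ expTerm (κ / 2) m * (expTerm (κ / 2) k * expTerm (κ / 2) m) := by
        gcongr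
        · exact expTerm_nonneg hx m
        · exact expTerm_add_le hx m k
    _ = _ := by rw [add_zero]; ring

lemma besselI_zero_le_exp {κ : ℝ} (hκ : 0 ≤ κ) : besselI 0 κ ≤ exp κ := by
  linarith [(hasSum_besselI_succ κ).nonneg fun k => besselI_nonneg hκ (k + 1)]

lemma one_add_two_div_mul_tsum_besselI_le {κ : ℝ} (hκ : 0 ≤ κ) {t : ℕ → ℝ} (ht : ∀ k, |t k| ≤ 1) :
    1 + 2 / besselI 0 κ * ∑' k, besselI (k + 1) κ * |t k| ≤ exp κ / besselI 0 κ := by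
  have hI₀ : 0 < besselI 0 κ := one_pos.trans_le (one_le_besselI_zero hκ)
  have hS := hasSum_besselI_succ κ
  have hle (k : ℕ) : besselI (k + 1) κ * |t k| ≤ besselI (k + 1) κ :=
    mul_le_of_le_one_right (besselI_nonneg hκ _) (ht k)
  have hsum := Summable.of_nonneg_of_le
    (fun k => mul_nonneg (besselI_nonneg hκ _) (abs_nonneg (t k))) hle hS.summable
  have := hasSum_le hle hsum.hasSum hS
  rw [le_div_iff₀ hI₀]
  field_simp
  linarith

lemma besselI_div_besselI_zero_mul_abs_le {κ : ℝ} (hκ : 0 ≤ κ) (k : ℕ) {t : ℝ} (ht : |t| ≤ 1) :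
    besselI k κ / besselI 0 κ * |t| ≤ expTerm (κ / 2) k * (exp κ / besselI 0 κ) := by
  have hI₀ : 0 < besselI 0 κ := one_pos.trans_le (one_le_besselI_zero hκ)
  calc _ ≤ besselI k κ / besselI 0 κ :=
        mul_le_of_le_one_right (div_nonneg (besselI_nonneg hκ k) hI₀.le) ht
    _ ≤ expTerm (κ / 2) k * exp κ / besselI 0 κ := by
        gcongr
        exact (besselI_le_expTerm_mul_besselI_zero hκ k).trans
          (mul_le_mul_of_nonneg_left (besselI_zero_le_exp hκ) (expTerm_nonneg (by positivity) k))
    _ = _ := mul_div_assoc _ _ _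

lemma hasSum_expTerm_succ (x : ℝ) : HasSum (fun k => expTerm x (k + 1)) (exp x - 1) := by
  have h := (hasSum_nat_add_iff' 1).mpr (hasSum_expTerm x)
  rwa [Finset.sum_range_one, expTerm, pow_zero, Nat.factorial_zero, Nat.cast_one, div_one] at h

lemma tsum_le_add_of_le_succ {t b : ℕ → ℝ} {a B : ℝ} (ht : ∀ k, 0 ≤ t k) (h₀ : t 0 ≤ a)
    (hsucc : ∀ k, t (k + 1) ≤ b k) (hb : HasSum b B) : ∑' k, t k ≤ a + B := by
  have hs : Summable fun k => t (k + 1) :=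
    Summable.of_nonneg_of_le (fun k => ht _) hsucc hb.summable
  rw [((summable_nat_add_iff 1).mp hs).tsum_eq_zero_add]
  exact add_le_add h₀ (hasSum_le hsucc hs.hasSum hb)

lemma tsum_mul_le_of_le_expTerm {w E : ℕ → ℝ} {A B D α x : ℝ} (hw : ∀ k, 0 ≤ w k)
    (hw₀ : w 0 ≤ A) (hw_succ : ∀ k, w (k + 1) ≤ B * expTerm x (k + 1))
    (hE₀ : ∀ k, 0 ≤ E k) (hE : ∀ k, E k ≤ D * α ^ k) :
    ∑' k, w k * E k ≤ D * (A + B * (exp (α * x) - 1)) := by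
  refine (tsum_le_add_of_le_succ (a := A * D) (fun k => mul_nonneg (hw k) (hE₀ k)) ?_
    (fun k => ?_) ((hasSum_expTerm_succ (α * x)).mul_left (B * D))).trans_eq (by ring)
  · simpa using mul_le_mul hw₀ (hE 0) (hE₀ 0) ((hw 0).trans hw₀)
  · calc w (k + 1) * E (k + 1) ≤ B * expTerm x (k + 1) * (D * α ^ (k + 1)) :=
          mul_le_mul (hw_succ k) (hE _) (hE₀ _) ((hw _).trans (hw_succ k))
      _ = B * D * expTerm (α * x) (k + 1) := by rw [← expTerm_mul_pow]; ring

/-- Also when the denominator vanishes (`x / 0 = 0`), as `q_k` does where `cos (k arccos λ') = 0`. -/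
lemma mul_sq_div_mul_abs (a b r t : ℝ) :
    (a * r * t) ^ 2 / (b * r * |t|) = a ^ 2 / b * (r * |t|) := by
  rcases eq_or_ne (r * t) 0 with h | h
  · rcases mul_eq_zero.mp h with h | h <;> simp [h]
  rcases eq_or_ne b 0 with rfl | hb
  · simp
  have hr : r ≠ 0 := left_ne_zero_of_mul h
  have ht : |t| ≠ 0 := abs_ne_zero.mpr (right_ne_zero_of_mul h)
  rw [mul_pow, mul_pow, ← sq_abs t]
  field_simp

theorem vonMises_importance_sampler_bound_general {D : ℕ} {Ω : Type*} [MeasurableSpace Ω]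
    (μ : Measure Ω) [IsProbabilityMeasure μ]
    (Ahat : ℕ → Ω → Matrix (Fin D) (Fin D) ℝ)
    (hmeas : ∀ k, Measurable (Ahat k))
    (hindep : iIndepFun Ahat μ)
    (hL2 : ∀ k, MemLp (fun ω => ‖Ahat k ω‖) 2 μ)
    (α : ℝ)
    (hα : ∀ k, 4 * (∫ ω, ‖Ahat k ω‖ ^ 2 ∂μ) + 2 * (∫ ω, ‖Ahat k ω‖ ∂μ) + 1 ≤ α)
    (κ lam' : ℝ) (hκ : 0 < κ)
    (γ q : ℕ → ℝ) (Zc : ℝ)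
    (hγ0 : γ 0 = 1 / π)
    (hγ : ∀ k : ℕ, 1 ≤ k →
      γ k = 2 / π * (besselI k κ / besselI 0 κ) * Real.cos (k * Real.arccos lam'))
    (hZc : Zc = 1 + 2 / besselI 0 κ *
      ∑' k : ℕ, besselI (k + 1) κ * |Real.cos ((k + 1 : ℕ) * Real.arccos lam')|)
    (hq0 : q 0 = 1 / Zc)
    (hq : ∀ k : ℕ, 1 ≤ k →
      q k = 2 / Zc * (besselI k κ / besselI 0 κ) * |Real.cos (k * Real.arccos lam')|) :
    ∑' k : ℕ, (γ k) ^ 2 / q k * (∫ ω, frobSq (randChebT Ahat k ω) ∂μ) ≤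
      D * Real.exp κ / (π ^ 2 * besselI 0 κ) *
        (1 + 2 * Real.exp κ / besselI 0 κ * (Real.exp (α * κ / 2) - 1)) := by
  set c := exp κ / besselI 0 κ
  have hI₀ : 0 < besselI 0 κ := one_pos.trans_le (one_le_besselI_zero hκ.le)
  have hZ : Zc ≤ c := hZc ▸ one_add_two_div_mul_tsum_besselI_le hκ.le fun _ => abs_cos_le_one _
  have hZ₀ : 0 ≤ Zc := hZc ▸ add_nonneg zero_le_one (mul_nonneg (by positivity)
    (tsum_nonneg fun k => mul_nonneg (besselI_nonneg hκ.le _) (abs_nonneg _)))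
  have hw₀ : γ 0 ^ 2 / q 0 = Zc / π ^ 2 := by
    rw [hγ0, hq0]; field_simp
  have hw (k : ℕ) : γ (k + 1) ^ 2 / q (k + 1) = 2 * Zc / π ^ 2 *
      (besselI (k + 1) κ / besselI 0 κ * |Real.cos ((k + 1 : ℕ) * Real.arccos lam')|) := by
    rw [hγ _ (by omega), hq _ (by omega), mul_sq_div_mul_abs]
    field_simp
  have hI (k : ℕ) : 0 ≤ besselI k κ / besselI 0 κ := div_nonneg (besselI_nonneg hκ.le k) hI₀.le
  refine (tsum_mul_le_of_le_expTerm (A := c / π ^ 2) (B := 2 * c ^ 2 / π ^ 2) (x := κ / 2)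
    (fun k => ?_) ?_ (fun k => ?_) (fun k => integral_nonneg fun ω => frobSq_nonneg _)
    (integral_frobSq_randChebT_le μ Ahat hmeas hindep hL2 hα)).trans_eq ?_
  · cases k with
    | zero => rw [hw₀]; exact div_nonneg hZ₀ (sq_nonneg π)
    | succ k => rw [hw]; have := hI (k + 1); positivity
  · rw [hw₀]; gcongr
  · have := hI (k + 1)
    have hc₀ : 0 ≤ c := hZ₀.trans hZ
    have he := expTerm_nonneg (x := κ / 2) (by positivity) (k + 1)
    calc _ ≤ 2 * c / π ^ 2 * (expTerm (κ / 2) (k + 1) * c) := by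
          rw [hw]
          gcongr 2 * ?_ / π ^ 2 * ?_
          exact besselI_div_besselI_zero_mul_abs_le hκ.le _ (abs_cos_le_one _)
      _ = _ := by ring
  · rw [← mul_div_assoc]
    simp only [c]
    field_simp

/-- Bound on the expected squared Frobenius norm of the importance-sampled randomized
Chebyshev estimator of the von Mises kernel:
`E[‖(γ_k/q_k) T̂_k‖_F²] ≤ (D e^κ/(π² I_0(κ))) (1 + (2e^κ/I_0(κ))(e^{ακ/2} − 1))`,
where the expectation is over `k ~ q` and the randomness of `T̂_k`. -/
theorem vonMises_importance_sampler_bound {D : ℕ} {Ω : Type*} [MeasurableSpace Ω]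
    (μ : Measure Ω) [IsProbabilityMeasure μ]
    (A : Matrix (Fin D) (Fin D) ℝ) (hAsymm : A.IsSymm)
    (Ahat : ℕ → Ω → Matrix (Fin D) (Fin D) ℝ)
    (hmeas : ∀ k, Measurable (Ahat k))
    (hindep : iIndepFun Ahat μ)
    (hL2 : ∀ k, MemLp (fun ω => ‖Ahat k ω‖) 2 μ)
    (hunbiased : ∀ k, matExp μ (Ahat k) = A)
    (α : ℝ)
    (hα : ∀ k, 4 * (∫ ω, ‖Ahat k ω‖ ^ 2 ∂μ) + 2 * (∫ ω, ‖Ahat k ω‖ ∂μ) + 1 ≤ α)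
    (κ lam' : ℝ) (hκ : 0 < κ) (hlam : lam' ∈ Set.Ioo (-1 : ℝ) 1)
    (γ q : ℕ → ℝ) (Zc : ℝ)
    (hγ0 : γ 0 = 1 / π)
    (hγ : ∀ k : ℕ, 1 ≤ k →
      γ k = 2 / π * (besselI k κ / besselI 0 κ) * Real.cos (k * Real.arccos lam'))
    (hZc : Zc = 1 + 2 / besselI 0 κ *
      ∑' k : ℕ, besselI (k + 1) κ * |Real.cos ((k + 1 : ℕ) * Real.arccos lam')|)
    (hq0 : q 0 = 1 / Zc)
    (hq : ∀ k : ℕ, 1 ≤ k →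
      q k = 2 / Zc * (besselI k κ / besselI 0 κ) * |Real.cos (k * Real.arccos lam')|) :
    ∑' k : ℕ, (γ k) ^ 2 / q k * (∫ ω, frobSq (randChebT Ahat k ω) ∂μ) ≤
      D * Real.exp κ / (π ^ 2 * besselI 0 κ) *
        (1 + 2 * Real.exp κ / besselI 0 κ * (Real.exp (α * κ / 2) - 1)) :=
  vonMises_importance_sampler_bound_general μ Ahat hmeas hindep hL2 α hα κ lam' hκ γ q Zc hγ0 hγ hZc
    hq0 hq
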